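/- Fix a measurable loss L : Θ → ℝ with infimum L* > −∞ and a prior π with π(S_δ) > 0 for every δ > 0, where S_δ = {θ : L(θ) ≤ L* + δ}. For γ > 0 define J_γ(q) = E_q[L] + γ·KL(q‖π) and let q_γ be any minimiser of J_γ. Then, as γ → 0 along any sequence, E_{q_γ}[L] → L* and J_γ(q_γ) → L*. -/

import Mathlib

/-!
Gibbs' inequality `KL(q‖π) ≥ 0` gives `L* ≤ E_q[L] ≤ J_γ(q)` for every probability measure
`q ≪ π`. For the matching upper bound, compare the minimiser with the prior conditioned on the
sublevel set `S_δ = {L ≤ L* + δ}`: its log-likelihood ratio against `π` is the constant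
`log (1/π(S_δ))`, so `J_γ(q_γ) ≤ L* + δ + γ · log (1/π(S_δ))`. Letting `γ → 0` for each fixed
`δ > 0` squeezes `J_γ(q_γ)`, and with it `E_{q_γ}[L]`, to `L*`.
-/

open MeasureTheory ProbabilityTheory Filter

/-- Kullback–Leibler divergence `KL(q‖π) = ∫ log (dq/dπ) dq` (for `q ≪ π`). -/
noncomputable def KL {Θ : Type*} [MeasurableSpace Θ] (q π : Measure Θ) : ℝ :=
  ∫ θ, llr q π θ ∂q

/-- The SoU / Gibbs objective `J_γ(q) = E_q[L] + γ·KL(q‖π)`. -/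
noncomputable def Jobj {Θ : Type*} [MeasurableSpace Θ] (L : Θ → ℝ) (π : Measure Θ)
    (γ : ℝ) (q : Measure Θ) : ℝ :=
  ∫ θ, L θ ∂q + γ * KL q π

section Gibbs

variable {Θ : Type*} [MeasurableSpace Θ]

lemma KL_nonneg {q π : Measure Θ} [IsProbabilityMeasure q] [IsProbabilityMeasure π]
    (hqπ : q ≪ π) : 0 ≤ KL q π := by
  rw [KL, ← InformationTheory.toReal_klDiv_of_measure_eq hqπ (by simp)]
  exact ENNReal.toReal_nonneg

lemma integral_le_Jobj (L : Θ → ℝ) {π q : Measure Θ} [IsProbabilityMeasure q]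
    [IsProbabilityMeasure π] (hqπ : q ≪ π) {γ : ℝ} (hγ : 0 ≤ γ) :
    ∫ θ, L θ ∂q ≤ Jobj L π γ q :=
  le_add_of_nonneg_right (mul_nonneg hγ (KL_nonneg hqπ))

lemma KL_cond_self {π : Measure Θ} [IsFiniteMeasure π] {s : Set Θ} (hs : MeasurableSet s)
    (hπs : π s ≠ 0) : KL π[|s] π = -Real.log (π.real s) := by
  have hllr : llr π[|s] π =ᵐ[π[|s]] fun _ => -Real.log (π.real s) := by
    have hres : π.restrict s ≪ π := Measure.absolutelyContinuous_of_le Measure.restrict_le_self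
    have hscale : llr π[|s] π =ᵐ[π.restrict s]
        fun θ => llr (π.restrict s) π θ + Real.log ((π s)⁻¹).toReal :=
      llr_smul_left hres _ (by simp [measure_ne_top π s]) (by simp [hπs])
    have hrestrict : ∀ᵐ θ ∂π.restrict s, llr (π.restrict s) π θ = 0 := by
      filter_upwards [hres.ae_le (Measure.rnDeriv_restrict_self π hs), ae_restrict_mem hs]
        with θ hθ hθs
      simp [llr, hθ, Set.indicator_of_mem hθs]
    have hcond : π[|s] ≪ π.restrict s := Measure.smul_absolutelyContinuous
    filter_upwards [hcond.ae_le hscale, hcond.ae_le hrestrict] with θ h₁ h₂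
    rw [h₁, h₂, zero_add, ENNReal.toReal_inv, Real.log_inv, measureReal_def]
  have := cond_isProbabilityMeasure hπs
  rw [KL, integral_congr_ae hllr, integral_const, probReal_univ, one_smul]

lemma integral_cond_le {π : Measure Θ} [IsFiniteMeasure π] {s : Set Θ} (hs : MeasurableSet s)
    (hπs : π s ≠ 0) {f : Θ → ℝ} (hf : Measurable f) {a b : ℝ} (ha : ∀ θ, a ≤ f θ)
    (hb : ∀ θ ∈ s, f θ ≤ b) : ∫ θ, f θ ∂π[|s] ≤ b := by
  have := cond_isProbabilityMeasure hπs
  have hle : ∀ᵐ θ ∂π[|s], f θ ≤ b := (ae_cond_mem hs).mono hb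
  have hint : Integrable f π[|s] := by
    refine Integrable.of_bound hf.aestronglyMeasurable (max |a| |b|) ?_
    filter_upwards [hle] with θ hθ
    exact abs_le_max_abs_abs (ha θ) hθ
  simpa using integral_mono_ae hint (integrable_const b) hle

lemma Jobj_cond_sublevel_le {π : Measure Θ} [IsFiniteMeasure π] {L : Θ → ℝ} (hL : Measurable L)
    {a b : ℝ} (ha : ∀ θ, a ≤ L θ) (hπb : π {θ | L θ ≤ b} ≠ 0) (γ : ℝ) :
    Jobj L π γ π[|{θ | L θ ≤ b}] ≤ b + γ * -Real.log (π.real {θ | L θ ≤ b}) := by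
  have hs : MeasurableSet {θ | L θ ≤ b} := hL measurableSet_Iic
  rw [Jobj, KL_cond_self hs hπb]
  gcongr
  exact integral_cond_le hs hπb hL ha fun _ h => h

end Gibbs

lemma tendsto_of_le_of_le_add_mul {ι : Type*} {l : Filter ι} {x γ : ι → ℝ} {a : ℝ}
    (hγ : Tendsto γ l (nhds 0)) (hlow : ∀ i, a ≤ x i)
    (hup : ∀ δ > 0, ∃ C, ∀ i, x i ≤ a + δ + γ i * C) : Tendsto x l (nhds a) := by
  refine tendsto_order.2 ⟨fun b hb => .of_forall fun i => hb.trans_le (hlow i), fun b hb => ?_⟩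
  obtain ⟨C, hC⟩ := hup ((b - a) / 2) (by linarith)
  have hγC : Tendsto (fun i => γ i * C) l (nhds 0) := by simpa using hγ.mul_const C
  filter_upwards [hγC.eventually (gt_mem_nhds (show (0 : ℝ) < (b - a) / 2 by linarith))] with i hi
  linarith [hC i]

theorem objective_collapse_loss_general {Θ : Type*} [MeasurableSpace Θ]
    (π : Measure Θ) [IsProbabilityMeasure π]
    (L : Θ → ℝ) (hL : Measurable L)
    (Lstar : ℝ) (hglb : IsGLB (Set.range L) Lstar)
    (hπ : ∀ δ : ℝ, 0 < δ → 0 < π {θ | L θ ≤ Lstar + δ})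
    (γ : ℕ → ℝ) (hγpos : ∀ m, 0 < γ m) (hγ0 : Tendsto γ atTop (nhds 0))
    (q : ℕ → Measure Θ) (hqprob : ∀ m, IsProbabilityMeasure (q m))
    (hqac : ∀ m, q m ≪ π)
    (hqint : ∀ m, Integrable L (q m))
    (hmin : ∀ m, ∀ q' : Measure Θ, IsProbabilityMeasure q' → q' ≪ π →
      Jobj L π (γ m) (q m) ≤ Jobj L π (γ m) q') :
    Tendsto (fun m => ∫ θ, L θ ∂(q m)) atTop (nhds Lstar) ∧
    Tendsto (fun m => Jobj L π (γ m) (q m)) atTop (nhds Lstar) := by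
  have hLge : ∀ θ, Lstar ≤ L θ := fun θ => hglb.1 ⟨θ, rfl⟩
  have hloss_ge : ∀ m, Lstar ≤ ∫ θ, L θ ∂(q m) := fun m => by
    simpa using integral_mono (integrable_const Lstar) (hqint m) hLge
  have hloss_le : ∀ m, ∫ θ, L θ ∂(q m) ≤ Jobj L π (γ m) (q m) :=
    fun m => integral_le_Jobj L (hqac m) (hγpos m).le
  have hJ : Tendsto (fun m => Jobj L π (γ m) (q m)) atTop (nhds Lstar) := by
    refine tendsto_of_le_of_le_add_mul hγ0 (fun m => (hloss_ge m).trans (hloss_le m))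
      fun δ hδ => ⟨-Real.log (π.real {θ | L θ ≤ Lstar + δ}), fun m => ?_⟩
    exact (hmin m _ (cond_isProbabilityMeasure (hπ δ hδ).ne') cond_absolutelyContinuous).trans
      (Jobj_cond_sublevel_le hL hLge (hπ δ hδ).ne' (γ m))
  exact ⟨tendsto_of_tendsto_of_tendsto_of_le_of_le tendsto_const_nhds hJ hloss_ge hloss_le, hJ⟩

/-- Objective collapse, part 1: as `γ → 0`, any minimisers `q_γ` of `J_γ` satisfy
`E_{q_γ}[L] → L*` and `J_γ(q_γ) → L*`. -/
theorem objective_collapse_loss {Θ : Type*} [MeasurableSpace Θ]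
    (π : Measure Θ) [IsProbabilityMeasure π]
    (L : Θ → ℝ) (hL : Measurable L)
    (Lstar : ℝ) (hglb : IsGLB (Set.range L) Lstar)
    (hπ : ∀ δ : ℝ, 0 < δ → 0 < π {θ | L θ ≤ Lstar + δ})
    (γ : ℕ → ℝ) (hγpos : ∀ m, 0 < γ m) (hγ0 : Tendsto γ atTop (nhds 0))
    (q : ℕ → Measure Θ) (hqprob : ∀ m, IsProbabilityMeasure (q m))
    (hqac : ∀ m, q m ≪ π)
    (hqint : ∀ m, Integrable L (q m)) (hqllr : ∀ m, Integrable (llr (q m) π) (q m))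
    (hmin : ∀ m, ∀ q' : Measure Θ, IsProbabilityMeasure q' → q' ≪ π →
      Jobj L π (γ m) (q m) ≤ Jobj L π (γ m) q') :
    Tendsto (fun m => ∫ θ, L θ ∂(q m)) atTop (nhds Lstar) ∧
    Tendsto (fun m => Jobj L π (γ m) (q m)) atTop (nhds Lstar) :=
  objective_collapse_loss_general π L hL Lstar hglb hπ γ hγpos hγ0 q hqprob hqac hqint hmin
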